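/- Conformal time-dependent mechanics (m = 1). Take base ℝ with coordinate t, Hamiltonian H(t,u^α,p_α) = (1/2)δ^{αβ}p_α p_β, and a 1-form ϑ = ϑ_t(t) dt (automatically closed). Then: (A) a section φ(t) = (t, σ^α(t), p_α(t)) of J¹π* → ℝ satisfies φ*(ι_X(Ω_θ)_h) = 0 for all vector fields X if and only if dσ^α/dt = p_α and dp_α/dt = ϑ_t p_α. (B) For smooth ρ(t,u), γ_α(t,u) with the 1+? -form γ̄ = ρ dt + γ_α du^α closed (i.e. ∂ρ/∂u^α = ∂γ_α/∂t and ∂γ_α/∂u^β = ∂γ_β/∂u^α), the condition d_ϑ(h∘μ∘γ̄) = 0 holds if and only if Σ_β γ_β(t,u) ∂γ_α/∂u^β(t,u) + ∂γ_α/∂t(t,u) − ϑ_t(t) γ_α(t,u) = 0 for all (t,u); and when this holds, every σ with dσ^α/dt = γ_α(t,σ(t)) gives a curve t ↦ (t, σ(t), γ_α(t,σ(t))) solving the equations in (A). -/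

import Mathlib

open scoped BigOperators

noncomputable section

/-- A raw `k`-cochain on `E`: a scalar function of a point and `k` tangent vectors.
Smooth differential `k`-forms are regarded as such cochains by evaluation. -/
abbrev Coch (E : Type) (k : ℕ) : Type := E → (Fin k → E) → ℝ

/-- The (componentwise) exterior derivative of a `k`-cochain:
`(dω)(x)(v₀,…,v_k) = ∑ⱼ (-1)ʲ ∂_{vⱼ}(y ↦ ω(y)(v₀,…,v̂ⱼ,…,v_k))(x)`. -/
noncomputable def extDer {E : Type} [NormedAddCommGroup E] [NormedSpace ℝ E] {k : ℕ}
    (ω : Coch E k) : Coch E (k + 1) := fun x v =>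
  ∑ j : Fin (k + 1),
    (-1 : ℝ) ^ (j : ℕ) * fderiv ℝ (fun y => ω y (v ∘ j.succAbove)) x (v j)

/-- Wedge product of a 1-cochain with a `k`-cochain:
`(θ∧ω)(x)(v₀,…,v_k) = ∑ⱼ (-1)ʲ θ(x)(vⱼ) ω(x)(v₀,…,v̂ⱼ,…,v_k)`. -/
def wedge1 {E : Type} {k : ℕ} (θ : Coch E 1) (ω : Coch E k) : Coch E (k + 1) := fun x v =>
  ∑ j : Fin (k + 1), (-1 : ℝ) ^ (j : ℕ) * θ x (fun _ => v j) * ω x (v ∘ j.succAbove)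

/-- Interior product (contraction) of a cochain with a vector field. -/
def iotaV {E : Type} {k : ℕ} (X : E → E) (ω : Coch E (k + 1)) : Coch E k := fun x v =>
  ω x (Fin.cons (X x) v)

/-- Pullback of a cochain along a (smooth) map. -/
noncomputable def pullC {E F : Type} [NormedAddCommGroup E] [NormedSpace ℝ E]
    [NormedAddCommGroup F] [NormedSpace ℝ F] {k : ℕ}
    (f : F → E) (ω : Coch E k) : Coch F k := fun x v =>
  ω (f x) fun a => fderiv ℝ f x (v a)

/-- The differential of a function, as a 1-cochain. -/
noncomputable def dFun {E : Type} [NormedAddCommGroup E] [NormedSpace ℝ E]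
    (H : E → ℝ) : Coch E 1 := fun q v => fderiv ℝ H q (v 0)

/-! ## The coordinate model of first-order Hamiltonian field theory

The base is `ℝ^m` with coordinates `xⁱ`, the configuration bundle is `E = ℝ^m × ℝ^N` with
fibre coordinates `u^α`, and the reduced multimomentum bundle is
`J¹π* = ℝ^m × ℝ^N × ℝ^{mN}` with coordinates `(xⁱ, u^α, pⁱ_α)`. -/

/-- `J¹π* = ℝ^m × ℝ^N × ℝ^{mN}` in coordinates `(xⁱ, u^α, pⁱ_α)`. -/
abbrev Jb (m N : ℕ) : Type := (Fin m → ℝ) × (Fin N → ℝ) × (Fin m → Fin N → ℝ)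

/-- The coordinate volume form `d_mx = dx¹∧⋯∧dx^m` on `J¹π*`. -/
def dmxJ (m N : ℕ) : Coch (Jb m N) m := fun _ v => Matrix.det (Matrix.of fun a b => (v b).1 a)

/-- The coordinate 1-form `du^α` on `J¹π*`. -/
def duJ (m N : ℕ) (α : Fin N) : Coch (Jb m N) 1 := fun _ v => (v 0).2.1 α

/-- The coordinate 1-form `dpⁱ_α` on `J¹π*`. -/
def dpJ (m N : ℕ) (i : Fin m) (α : Fin N) : Coch (Jb m N) 1 := fun _ v => (v 0).2.2 i α

/-- The coordinate vector `∂/∂xⁱ` on `J¹π*`. -/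
def XdirJ (m N : ℕ) (i : Fin m) : Jb m N := (Pi.single i 1, 0, 0)

/-- The coordinate vector `∂/∂u^α` on `J¹π*`. -/
def UdirJ (m N : ℕ) (α : Fin N) : Jb m N := (0, Pi.single α 1, 0)

/-- The coordinate vector `∂/∂pⁱ_α` on `J¹π*`. -/
def PdirJ (m N : ℕ) (i : Fin m) (α : Fin N) : Jb m N := (0, 0, Pi.single i (Pi.single α 1))

/-- The `m`-form `du^α ∧ (∂_i ⌟ d_mx) = -(∂_i ⌟ (du^α ∧ d_mx))` on `J¹π*`. -/
def duContr (m N : ℕ) (α : Fin N) (i : Fin m) : Coch (Jb m N) m := fun q v =>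
  -(iotaV (fun _ => XdirJ m N i) (wedge1 (duJ m N α) (dmxJ m N)) q v)

/-- The Hamiltonian `(m+1)`-form `Ω_h = dH∧d_mx − dpⁱ_α∧du^α∧(∂_i⌟d_mx)` on `J¹π*`. -/
noncomputable def OmegaH (m N : ℕ) (H : Jb m N → ℝ) : Coch (Jb m N) (m + 1) := fun q v =>
  wedge1 (dFun H) (dmxJ m N) q v -
    ∑ i : Fin m, ∑ α : Fin N, wedge1 (dpJ m N i α) (duContr m N α i) q v

/-- The `m`-form `Θ_h = −H d_mx + pⁱ_α du^α∧(∂_i⌟d_mx)` on `J¹π*`. -/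
noncomputable def ThetaHc (m N : ℕ) (H : Jb m N → ℝ) : Coch (Jb m N) m := fun q v =>
  -(H q) * dmxJ m N q v + ∑ i : Fin m, ∑ α : Fin N, q.2.2 i α * duContr m N α i q v

/-- The pullback to `J¹π*` of the 1-form `ϑ = ϑ_i(x) dxⁱ` on the base. -/
def thJ (m N : ℕ) (ϑ : (Fin m → ℝ) → Fin m → ℝ) : Coch (Jb m N) 1 := fun q v =>
  ∑ i : Fin m, ϑ q.1 i * (v 0).1 i

/-- The locally conformal Hamiltonian `(m+1)`-form `(Ω_θ)_h = Ω_h + θ∧Θ_h` on `J¹π*`. -/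
noncomputable def OmegaThH (m N : ℕ) (H : Jb m N → ℝ) (ϑ : (Fin m → ℝ) → Fin m → ℝ) :
    Coch (Jb m N) (m + 1) := fun q v =>
  OmegaH m N H q v + wedge1 (thJ m N ϑ) (ThetaHc m N H) q v

/-- The section `φ(x) = (x, φ^α(x), φⁱ_α(x))` of `J¹π* → ℝ^m`. -/
def secJ (m N : ℕ) (φ : (Fin m → ℝ) → Fin N → ℝ) (P : (Fin m → ℝ) → Fin m → Fin N → ℝ) :
    (Fin m → ℝ) → Jb m N := fun x => (x, φ x, P x)

/-- Closedness of the 1-form `ϑ_i(x) dxⁱ` on `ℝ^m`, in coordinates. -/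
def ClosedOneForm (m : ℕ) (ϑ : (Fin m → ℝ) → Fin m → ℝ) : Prop :=
  ∀ (x : Fin m → ℝ) (i j : Fin m),
    fderiv ℝ (fun y => ϑ y i) x (Pi.single j 1) = fderiv ℝ (fun y => ϑ y j) x (Pi.single i 1)

/-- The Hamilton–De Donder–Weyl equations in coordinates:
`∂φ^α/∂xⁱ = ∂H/∂pⁱ_α ∘ φ` and `∑ᵢ ∂φⁱ_α/∂xⁱ = −∂H/∂u^α ∘ φ`. -/
def HDWeq (m N : ℕ) (H : Jb m N → ℝ) (φ : (Fin m → ℝ) → Fin N → ℝ)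
    (P : (Fin m → ℝ) → Fin m → Fin N → ℝ) : Prop :=
  (∀ (x : Fin m → ℝ) (i : Fin m) (α : Fin N),
      fderiv ℝ φ x (Pi.single i 1) α = fderiv ℝ H (secJ m N φ P x) (PdirJ m N i α)) ∧
  (∀ (x : Fin m → ℝ) (α : Fin N),
      (∑ i : Fin m, fderiv ℝ P x (Pi.single i 1) i α) =
        -(fderiv ℝ H (secJ m N φ P x) (UdirJ m N α)))

/-- The locally conformal Hamilton–De Donder–Weyl equations in coordinates:
`∂φ^α/∂xⁱ = ∂H/∂pⁱ_α ∘ φ` and `∑ᵢ ∂φⁱ_α/∂xⁱ = −∂H/∂u^α ∘ φ + ϑ_i φⁱ_α`. -/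
def lcHDWeq (m N : ℕ) (H : Jb m N → ℝ) (ϑ : (Fin m → ℝ) → Fin m → ℝ)
    (φ : (Fin m → ℝ) → Fin N → ℝ) (P : (Fin m → ℝ) → Fin m → Fin N → ℝ) : Prop :=
  (∀ (x : Fin m → ℝ) (i : Fin m) (α : Fin N),
      fderiv ℝ φ x (Pi.single i 1) α = fderiv ℝ H (secJ m N φ P x) (PdirJ m N i α)) ∧
  (∀ (x : Fin m → ℝ) (α : Fin N),
      (∑ i : Fin m, fderiv ℝ P x (Pi.single i 1) i α) =
        -(fderiv ℝ H (secJ m N φ P x) (UdirJ m N α)) + ∑ i : Fin m, ϑ x i * P x i α)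

/-- The configuration bundle `E = ℝ × ℝ^N` with coordinates `(t, u^α)` (here `m = 1`). -/
abbrev Eb (N : ℕ) : Type := (Fin 1 → ℝ) × (Fin N → ℝ)

/-- The pullback to `E` of the 1-form `ϑ = ϑ_t dt` on the base `ℝ`. -/
def thE (N : ℕ) (ϑ : (Fin 1 → ℝ) → Fin 1 → ℝ) : Coch (Eb N) 1 := fun e v =>
  ϑ e.1 0 * (v 0).1 0

/-!
(A) The `H`-terms of `θ ∧ Θ_h` cancel in `ι_X (Ω_θ)_h`, and its pullback along
`φ = (t, σ, p)` is `(X^{p_α} (p_α - σ̇^α) + X^{u^α} (ṗ_α - ϑ_t p_α) + X^t p_α (ϑ_t σ̇^α - ṗ_α)) dt`;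
the constant fields `∂/∂p_α` and `∂/∂u^α` extract the two equations, which in turn kill every term.

(B) Closedness of `γ̄` (`∂_β γ_α = ∂_α γ_β`) kills the `du ∧ du` part of `d(γ_α du^α)` and turns
`d(H ∘ γ) = γ_α ∂_β γ_α du^β + …` into `γ_α ∂_α γ_β du^β + …`, so that
`d_ϑ(h ∘ μ ∘ γ̄) = (γ_α ∂_α γ_β + ∂_t γ_β - ϑ_t γ_β) dt ∧ du^β`.
Along an integral curve of `γ` the chain rule gives `d/dt γ_α(t, σ) = ∂_t γ_α + γ_β ∂_β γ_α`,
which is `ϑ_t γ_α` by the Hamilton–Jacobi equation.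
-/

theorem hasFDerivAt_half_sum_mul_self {E ι : Type*} [NormedAddCommGroup E] [NormedSpace ℝ E]
    [Fintype ι] {f : ι → E → ℝ} {f' : ι → E →L[ℝ] ℝ} {x : E}
    (hf : ∀ i, HasFDerivAt (f i) (f' i) x) :
    HasFDerivAt (fun y => (1 / 2 : ℝ) * ∑ i, f i y * f i y) (∑ i, f i x • f' i) x := by
  refine ((HasFDerivAt.fun_sum fun i _ => (hf i).fun_mul (hf i)).const_mul (1 / 2 : ℝ))
    |>.congr_fderiv ?_
  ext v
  simp only [smul_apply, sum_apply, add_apply, smul_eq_mul, Finset.mul_sum]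
  exact Finset.sum_congr rfl fun i _ => by ring

theorem ContinuousLinearMap.apply_eq_sum_single {ι F : Type*} [Fintype ι] [DecidableEq ι]
    [NormedAddCommGroup F] [NormedSpace ℝ F] (L : (ι → ℝ) →L[ℝ] F) (x : ι → ℝ) :
    L x = ∑ i, x i • L (Pi.single i 1) := by
  conv_lhs => rw [pi_eq_sum_univ' x]
  simp only [map_sum, map_smul]

theorem ContinuousLinearMap.apply_prod_fin_one {N : ℕ} (L : Eb N →L[ℝ] ℝ) (X : Eb N) :
    L X = X.1 0 * L (Pi.single 0 1, 0) + ∑ β, X.2 β * L (0, Pi.single β 1) := by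
  have hX : X = (ContinuousLinearMap.inl ℝ _ _) X.1 + (ContinuousLinearMap.inr ℝ _ _) X.2 := by
    simp
  rw [hX, map_add, ← L.comp_apply, ← L.comp_apply, apply_eq_sum_single, apply_eq_sum_single]
  simp

theorem sum_sum_mul_mul_comm_of_symm {ι : Type*} [Fintype ι] (U : ι → ι → ℝ)
    (hU : ∀ i j, U i j = U j i) (x y : ι → ℝ) :
    ∑ i, (∑ j, x j * U i j) * y i = ∑ i, (∑ j, y j * U i j) * x i := by
  simp only [Finset.sum_mul]
  rw [Finset.sum_comm]
  exact Finset.sum_congr rfl fun i _ => Finset.sum_congr rfl fun j _ => by rw [hU]; ring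

theorem wedge1_apply_fin_two {E : Type} (θ ω : Coch E 1) (x : E) (v : Fin 2 → E) :
    wedge1 θ ω x v = θ x (fun _ => v 0) * ω x (fun _ => v 1) -
      θ x (fun _ => v 1) * ω x (fun _ => v 0) := by
  simp [wedge1, Fin.sum_univ_two, Function.comp_def, Fin.succAbove, Fin.eq_zero, sub_eq_add_neg]

theorem extDer_apply_fin_two {E : Type} [NormedAddCommGroup E] [NormedSpace ℝ E]
    (ω : Coch E 1) (x : E) (v : Fin 2 → E) :
    extDer ω x v = fderiv ℝ (fun y => ω y fun _ => v 1) x (v 0) -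
      fderiv ℝ (fun y => ω y fun _ => v 0) x (v 1) := by
  simp [extDer, Fin.sum_univ_two, Function.comp_def, Fin.succAbove, Fin.eq_zero, sub_eq_add_neg]

theorem dmxJ_one_apply {N : ℕ} (q : Jb 1 N) (v : Fin 1 → Jb 1 N) : dmxJ 1 N q v = (v 0).1 0 := by
  simp [dmxJ]

theorem duContr_one_apply {N : ℕ} (α : Fin N) (q : Jb 1 N) (v : Fin 1 → Jb 1 N) :
    duContr 1 N α 0 q v = (v 0).2.1 α := by
  simp [duContr, iotaV, wedge1_apply_fin_two, duJ, dmxJ_one_apply, XdirJ]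

def kineticHamiltonian (N : ℕ) : Jb 1 N → ℝ := fun q =>
  (1 / 2) * ∑ α : Fin N, q.2.2 0 α * q.2.2 0 α

theorem fderiv_kineticHamiltonian_apply {N : ℕ} (q Y : Jb 1 N) :
    fderiv ℝ (kineticHamiltonian N) q Y = ∑ α, q.2.2 0 α * Y.2.2 0 α := by
  let p (α : Fin N) : Jb 1 N →L[ℝ] ℝ :=
    (ContinuousLinearMap.proj α).comp <| (ContinuousLinearMap.proj (0 : Fin 1)).comp <|
      (ContinuousLinearMap.snd ℝ (Fin N → ℝ) (Fin 1 → Fin N → ℝ)).comp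
        (ContinuousLinearMap.snd ℝ (Fin 1 → ℝ) ((Fin N → ℝ) × (Fin 1 → Fin N → ℝ)))
  change fderiv ℝ (fun q => (1 / 2 : ℝ) * ∑ α, p α q * p α q) q Y = _
  rw [(hasFDerivAt_half_sum_mul_self fun α => (p α).hasFDerivAt).fderiv]
  simp [p]

theorem OmegaThH_one_apply {N : ℕ} (ϑ : (Fin 1 → ℝ) → Fin 1 → ℝ) (q : Jb 1 N)
    (w : Fin 2 → Jb 1 N) :
    OmegaThH 1 N (kineticHamiltonian N) ϑ q w =
      ∑ α, (q.2.2 0 α * ((w 0).2.2 0 α * (w 1).1 0 - (w 1).2.2 0 α * (w 0).1 0) -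
        ((w 0).2.2 0 α * (w 1).2.1 α - (w 1).2.2 0 α * (w 0).2.1 α) +
        ϑ q.1 0 * q.2.2 0 α * ((w 0).1 0 * (w 1).2.1 α - (w 1).1 0 * (w 0).2.1 α)) := by
  simp only [OmegaThH, OmegaH, ThetaHc, wedge1_apply_fin_two, thJ, dFun, dpJ,
    fderiv_kineticHamiltonian_apply, dmxJ_one_apply, duContr_one_apply, Fin.sum_univ_one]
  rw [← sub_eq_zero]
  ring_nf
  simp only [Finset.mul_sum, Finset.sum_mul, ← Finset.sum_add_distrib, ← Finset.sum_sub_distrib]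
  exact Finset.sum_eq_zero fun _ _ => by ring

theorem fderiv_secJ_apply {m N : ℕ} {φ : (Fin m → ℝ) → Fin N → ℝ}
    {P : (Fin m → ℝ) → Fin m → Fin N → ℝ} {x : Fin m → ℝ} (hφ : DifferentiableAt ℝ φ x)
    (hP : DifferentiableAt ℝ P x) (s : Fin m → ℝ) :
    fderiv ℝ (secJ m N φ P) x s = (s, fderiv ℝ φ x s, fderiv ℝ P x s) := by
  have h : HasFDerivAt (secJ m N φ P) _ x :=
    (hasFDerivAt_id x).prodMk (hφ.hasFDerivAt.prodMk hP.hasFDerivAt)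
  rw [h.fderiv]
  rfl

theorem pullC_secJ_iotaV_OmegaThH_apply {N : ℕ} (ϑ : (Fin 1 → ℝ) → Fin 1 → ℝ)
    {σ : (Fin 1 → ℝ) → Fin N → ℝ} {P : (Fin 1 → ℝ) → Fin 1 → Fin N → ℝ}
    (hσ : Differentiable ℝ σ) (hP : Differentiable ℝ P) (X : Jb 1 N → Jb 1 N)
    (t : Fin 1 → ℝ) (v : Fin 1 → Fin 1 → ℝ) :
    pullC (secJ 1 N σ P) (iotaV X (OmegaThH 1 N (kineticHamiltonian N) ϑ)) t v =
      v 0 0 * ∑ α, ((X (secJ 1 N σ P t)).2.2 0 α * (P t 0 α - fderiv ℝ σ t (Pi.single 0 1) α) +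
        (X (secJ 1 N σ P t)).2.1 α *
          (fderiv ℝ P t (Pi.single 0 1) 0 α - ϑ t 0 * P t 0 α) +
        (X (secJ 1 N σ P t)).1 0 * P t 0 α *
          (ϑ t 0 * fderiv ℝ σ t (Pi.single 0 1) α - fderiv ℝ P t (Pi.single 0 1) 0 α)) := by
  simp only [pullC, iotaV, OmegaThH_one_apply, Fin.cons_zero, Fin.cons_one,
    fderiv_secJ_apply (hσ t) (hP t), (fderiv ℝ σ t).apply_eq_sum_single (v 0),
    (fderiv ℝ P t).apply_eq_sum_single (v 0), Fin.sum_univ_one, Finset.mul_sum]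
  refine Finset.sum_congr rfl fun α _ => ?_
  simp only [secJ, Pi.smul_apply, smul_eq_mul]
  ring

theorem pullC_secJ_iotaV_OmegaThH_eq_zero_iff {N : ℕ} (ϑ : (Fin 1 → ℝ) → Fin 1 → ℝ)
    {σ : (Fin 1 → ℝ) → Fin N → ℝ} {P : (Fin 1 → ℝ) → Fin 1 → Fin N → ℝ}
    (hσ : Differentiable ℝ σ) (hP : Differentiable ℝ P) :
    (∀ X : Jb 1 N → Jb 1 N, ContDiff ℝ (⊤ : ℕ∞) X →
        ∀ (t : Fin 1 → ℝ) (v : Fin 1 → Fin 1 → ℝ),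
          pullC (secJ 1 N σ P) (iotaV X (OmegaThH 1 N (kineticHamiltonian N) ϑ)) t v = 0) ↔
      ∀ (t : Fin 1 → ℝ) (α : Fin N),
        fderiv ℝ σ t (Pi.single 0 1) α = P t 0 α ∧
        fderiv ℝ P t (Pi.single 0 1) 0 α = ϑ t 0 * P t 0 α := by
  simp only [pullC_secJ_iotaV_OmegaThH_apply ϑ hσ hP]
  constructor
  · intro h t α
    have hp := h (fun _ => PdirJ 1 N 0 α) contDiff_const t fun _ => Pi.single 0 1
    have hu := h (fun _ => UdirJ 1 N α) contDiff_const t fun _ => Pi.single 0 1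
    simp only [Fin.isValue, Pi.single_eq_same, PdirJ, Pi.single_apply, ite_mul, one_mul, zero_mul,
      Pi.zero_apply, add_zero, Finset.sum_ite_eq', Finset.mem_univ, ↓reduceIte, UdirJ, zero_add]
      at hp hu
    constructor <;> linarith
  · intro h X _ t v
    simp [(h t _).1, (h t _).2]

-- `h ∘ μ ∘ γ̄ = -H(t, u, γ) dt + γ_α du^α`
def hjForm (N : ℕ) (γ : Eb N → Fin N → ℝ) : Coch (Eb N) 1 := fun e v =>
  -(kineticHamiltonian N (e.1, e.2, fun _ => γ e)) * (v 0).1 0 + ∑ α, γ e α * (v 0).2 α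

def hjResidual {N : ℕ} (γ : Eb N → Fin N → ℝ) (ϑ : (Fin 1 → ℝ) → Fin 1 → ℝ) (e : Eb N)
    (α : Fin N) : ℝ :=
  (∑ β, γ e β * fderiv ℝ (fun y => γ y α) e (0, Pi.single β 1)) +
    fderiv ℝ (fun y => γ y α) e (Pi.single 0 1, 0) - ϑ e.1 0 * γ e α

theorem fderiv_hjForm_apply {N : ℕ} {γ : Eb N → Fin N → ℝ} {e : Eb N}
    (hγ : DifferentiableAt ℝ γ e) (w X : Eb N) :
    fderiv ℝ (fun y => hjForm N γ y fun _ => w) e X =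
      -(∑ α, γ e α * fderiv ℝ (fun y => γ y α) e X) * w.1 0 +
        ∑ α, fderiv ℝ (fun y => γ y α) e X * w.2 α := by
  have hγα (α : Fin N) : HasFDerivAt (fun y => γ y α) (fderiv ℝ (fun y => γ y α) e) e :=
    (differentiableAt_pi.mp hγ α).hasFDerivAt
  have h : HasFDerivAt (fun y => hjForm N γ y fun _ => w)
      (w.1 0 • -(∑ α, γ e α • fderiv ℝ (fun y => γ y α) e) +
        ∑ α, w.2 α • fderiv ℝ (fun y => γ y α) e) e :=
    ((hasFDerivAt_half_sum_mul_self hγα).neg.mul_const (w.1 0)).add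
      (HasFDerivAt.fun_sum fun α (_ : α ∈ Finset.univ) => (hγα α).mul_const (w.2 α))
  rw [h.fderiv]
  simp [mul_comm]

theorem extDer_hjForm_apply {N : ℕ} {γ : Eb N → Fin N → ℝ} {e : Eb N}
    (hγ : DifferentiableAt ℝ γ e)
    (hsymm : ∀ α β, fderiv ℝ (fun y => γ y α) e (0, Pi.single β 1) =
      fderiv ℝ (fun y => γ y β) e (0, Pi.single α 1)) (v : Fin 2 → Eb N) :
    extDer (hjForm N γ) e v =
      ∑ α, ((∑ β, γ e β * fderiv ℝ (fun y => γ y α) e (0, Pi.single β 1)) +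
          fderiv ℝ (fun y => γ y α) e (Pi.single 0 1, 0)) *
        ((v 0).1 0 * (v 1).2 α - (v 1).1 0 * (v 0).2 α) := by
  rw [extDer_apply_fin_two, fderiv_hjForm_apply hγ, fderiv_hjForm_apply hγ]
  set L := fun α => fderiv ℝ (fun y => γ y α) e
  set U := fun α β => L α (0, Pi.single β 1)
  set w := fun α => (v 0).1 0 * (v 1).2 α - (v 1).1 0 * (v 0).2 α
  have hL (α : Fin N) (X : Eb N) :
      L α X = X.1 0 * L α (Pi.single 0 1, 0) + ∑ β, X.2 β * U α β :=
    (L α).apply_prod_fin_one X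
  have energy : (∑ α, γ e α * L α (v 1)) * (v 0).1 0 - (∑ α, γ e α * L α (v 0)) * (v 1).1 0 =
      ∑ α, (∑ β, γ e β * U α β) * w α :=
    calc _ = ∑ α, γ e α * L α ((v 0).1 0 • v 1 - (v 1).1 0 • v 0) := by
          simp only [map_sub, map_smul, smul_eq_mul, Finset.sum_mul, ← Finset.sum_sub_distrib]
          exact Finset.sum_congr rfl fun _ _ => by ring
      _ = ∑ α, (∑ β, w β * U α β) * γ e α := by
          refine Finset.sum_congr rfl fun α _ => ?_
          rw [hL, mul_comm]
          simp [w, mul_comm]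
      _ = _ := sum_sum_mul_mul_comm_of_symm U hsymm w (γ e)
  have twoForm : ∑ α, L α (v 0) * (v 1).2 α - ∑ α, L α (v 1) * (v 0).2 α =
      ∑ α, L α (Pi.single 0 1, 0) * w α := by
    rw [← sub_eq_zero, ← sub_eq_zero.mpr (sum_sum_mul_mul_comm_of_symm U hsymm (v 0).2 (v 1).2)]
    simp only [← Finset.sum_sub_distrib]
    exact Finset.sum_congr rfl fun α _ => by rw [hL α (v 0), hL α (v 1)]; ring
  simp only [add_mul, Finset.sum_add_distrib]
  rw [← energy, ← twoForm]
  ring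

theorem wedge1_thE_hjForm_apply {N : ℕ} (ϑ : (Fin 1 → ℝ) → Fin 1 → ℝ) (γ : Eb N → Fin N → ℝ)
    (e : Eb N) (v : Fin 2 → Eb N) :
    wedge1 (thE N ϑ) (hjForm N γ) e v =
      ϑ e.1 0 * ∑ α, γ e α * ((v 0).1 0 * (v 1).2 α - (v 1).1 0 * (v 0).2 α) := by
  have hsplit : ∑ α, γ e α * ((v 0).1 0 * (v 1).2 α - (v 1).1 0 * (v 0).2 α) =
      (v 0).1 0 * ∑ α, γ e α * (v 1).2 α - (v 1).1 0 * ∑ α, γ e α * (v 0).2 α := by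
    simp only [Finset.mul_sum, ← Finset.sum_sub_distrib]
    exact Finset.sum_congr rfl fun _ _ => by ring
  simp only [wedge1_apply_fin_two, thE, hjForm, hsplit]
  ring

theorem extDer_sub_wedge1_hjForm_apply {N : ℕ} (ϑ : (Fin 1 → ℝ) → Fin 1 → ℝ)
    {γ : Eb N → Fin N → ℝ} {e : Eb N} (hγ : DifferentiableAt ℝ γ e)
    (hsymm : ∀ α β, fderiv ℝ (fun y => γ y α) e (0, Pi.single β 1) =
      fderiv ℝ (fun y => γ y β) e (0, Pi.single α 1)) (v : Fin 2 → Eb N) :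
    extDer (hjForm N γ) e v - wedge1 (thE N ϑ) (hjForm N γ) e v =
      ∑ α, hjResidual γ ϑ e α * ((v 0).1 0 * (v 1).2 α - (v 1).1 0 * (v 0).2 α) := by
  rw [extDer_hjForm_apply hγ hsymm, wedge1_thE_hjForm_apply, Finset.mul_sum,
    ← Finset.sum_sub_distrib]
  exact Finset.sum_congr rfl fun _ _ => by rw [hjResidual]; ring

theorem extDer_sub_wedge1_hjForm_eq_zero_iff {N : ℕ} (ϑ : (Fin 1 → ℝ) → Fin 1 → ℝ)
    {γ : Eb N → Fin N → ℝ} (hγ : Differentiable ℝ γ)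
    (hsymm : ∀ (e : Eb N) (α β : Fin N), fderiv ℝ (fun y => γ y α) e (0, Pi.single β 1) =
      fderiv ℝ (fun y => γ y β) e (0, Pi.single α 1)) :
    (∀ (e : Eb N) (v : Fin 2 → Eb N),
        extDer (hjForm N γ) e v - wedge1 (thE N ϑ) (hjForm N γ) e v = 0) ↔
      ∀ (e : Eb N) (α : Fin N), hjResidual γ ϑ e α = 0 := by
  simp only [extDer_sub_wedge1_hjForm_apply ϑ (hγ _) (hsymm _)]
  constructor
  · intro h e α
    simpa [Pi.single_apply] using h e ![(Pi.single 0 1, 0), (0, Pi.single α 1)]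
  · intro h e v
    simp [h]

theorem fderiv_comp_integralCurve_of_hjResidual_eq_zero {N : ℕ} (ϑ : (Fin 1 → ℝ) → Fin 1 → ℝ)
    {γ : Eb N → Fin N → ℝ} {σ : (Fin 1 → ℝ) → Fin N → ℝ} (hγ : Differentiable ℝ γ)
    (hσ : Differentiable ℝ σ)
    (hint : ∀ t α, fderiv ℝ σ t (Pi.single 0 1) α = γ (t, σ t) α)
    (hHJ : ∀ e α, hjResidual γ ϑ e α = 0) (t : Fin 1 → ℝ) (α : Fin N) :
    fderiv ℝ (fun s => γ (s, σ s) α) t (Pi.single 0 1) = ϑ t 0 * γ (t, σ t) α := by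
  have hcurve : HasFDerivAt (fun s => ((s, σ s) : Eb N))
      ((ContinuousLinearMap.id ℝ (Fin 1 → ℝ)).prod (fderiv ℝ σ t)) t :=
    (hasFDerivAt_id t).prodMk (hσ t).hasFDerivAt
  have hcomp : HasFDerivAt (fun s => γ (s, σ s) α) _ t :=
    (differentiableAt_pi.mp (hγ _) α).hasFDerivAt.comp t hcurve
  have h := hHJ (t, σ t) α
  rw [hjResidual] at h
  rw [hcomp.fderiv, ContinuousLinearMap.comp_apply, ContinuousLinearMap.prod_apply,
    ContinuousLinearMap.apply_prod_fin_one]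
  simp only [ContinuousLinearMap.id_apply, Pi.single_eq_same, one_mul, hint]
  linarith

theorem conformal_time_dependent_mechanics_general (N : ℕ)
    (H : Jb 1 N → ℝ)
    (hHdef : ∀ q : Jb 1 N, H q = (1 / 2) * ∑ α : Fin N, q.2.2 0 α * q.2.2 0 α)
    (ϑ : (Fin 1 → ℝ) → Fin 1 → ℝ) :
    -- (A)
    (∀ (σ : (Fin 1 → ℝ) → Fin N → ℝ) (P : (Fin 1 → ℝ) → Fin 1 → Fin N → ℝ),
      ContDiff ℝ (⊤ : ℕ∞) σ → ContDiff ℝ (⊤ : ℕ∞) P →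
      ((∀ X : Jb 1 N → Jb 1 N, ContDiff ℝ (⊤ : ℕ∞) X →
          ∀ (t : Fin 1 → ℝ) (v : Fin 1 → Fin 1 → ℝ),
            pullC (secJ 1 N σ P) (iotaV X (OmegaThH 1 N H ϑ)) t v = 0) ↔
        (∀ (t : Fin 1 → ℝ) (α : Fin N),
          fderiv ℝ σ t (Pi.single 0 1) α = P t 0 α ∧
          fderiv ℝ P t (Pi.single 0 1) 0 α = ϑ t 0 * P t 0 α))) ∧
    -- (B)
    (∀ (ρ : Eb N → ℝ) (γ : Eb N → Fin N → ℝ),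
      ContDiff ℝ (⊤ : ℕ∞) ρ → ContDiff ℝ (⊤ : ℕ∞) γ →
      -- closedness of `γ̄ = ρ dt + γ_α du^α`:  `∂ρ/∂u^α = ∂γ_α/∂t`
      (∀ (e : Eb N) (α : Fin N),
        fderiv ℝ ρ e (0, Pi.single α 1) =
          fderiv ℝ (fun y => γ y α) e (Pi.single 0 1, 0)) →
      -- closedness of `γ̄`:  `∂γ_α/∂u^β = ∂γ_β/∂u^α`
      (∀ (e : Eb N) (α β : Fin N),
        fderiv ℝ (fun y => γ y α) e (0, Pi.single β 1) =
          fderiv ℝ (fun y => γ y β) e (0, Pi.single α 1)) →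
      -- `h∘μ∘γ̄ = −H(t,u,γ(t,u)) dt + γ_α du^α` as a 1-form on `E`
      ∀ G : Coch (Eb N) 1,
      (∀ (e : Eb N) (v : Fin 1 → Eb N),
        G e v = -(H (e.1, e.2, fun _ => γ e)) * (v 0).1 0 +
          ∑ α : Fin N, γ e α * (v 0).2 α) →
      -- `d_ϑ(h∘μ∘γ̄) = 0` iff the coordinate Hamilton–Jacobi equation
      (((∀ (e : Eb N) (v : Fin 2 → Eb N),
          extDer G e v - wedge1 (thE N ϑ) G e v = 0) ↔
        (∀ (e : Eb N) (α : Fin N),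
          (∑ β : Fin N, γ e β * fderiv ℝ (fun y => γ y α) e (0, Pi.single β 1)) +
            fderiv ℝ (fun y => γ y α) e (Pi.single 0 1, 0) - ϑ e.1 0 * γ e α = 0)) ∧
      -- and when it holds, integral sections of `h^γ` solve the equations of (A)
      ((∀ (e : Eb N) (v : Fin 2 → Eb N),
          extDer G e v - wedge1 (thE N ϑ) G e v = 0) →
        ∀ σ : (Fin 1 → ℝ) → Fin N → ℝ, ContDiff ℝ (⊤ : ℕ∞) σ →
          (∀ (t : Fin 1 → ℝ) (α : Fin N),
            fderiv ℝ σ t (Pi.single 0 1) α = γ (t, σ t) α) →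
          (∀ (t : Fin 1 → ℝ) (α : Fin N),
            fderiv ℝ σ t (Pi.single 0 1) α = γ (t, σ t) α ∧
            fderiv ℝ (fun s => γ (s, σ s) α) t (Pi.single 0 1) =
              ϑ t 0 * γ (t, σ t) α)))) := by
  obtain rfl : H = kineticHamiltonian N := funext hHdef
  refine ⟨fun σ P hσ hP => pullC_secJ_iotaV_OmegaThH_eq_zero_iff ϑ
    (hσ.differentiable (by simp)) (hP.differentiable (by simp)), ?_⟩
  intro ρ γ _ hγ _ hsymm G hG
  obtain rfl : G = hjForm N γ := funext₂ hG
  have hγ' : Differentiable ℝ γ := hγ.differentiable (by simp)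
  have hiff := extDer_sub_wedge1_hjForm_eq_zero_iff ϑ hγ' hsymm
  refine ⟨hiff, fun hdϑ σ hσ hint t α => ⟨hint t α, ?_⟩⟩
  exact fderiv_comp_integralCurve_of_hjResidual_eq_zero ϑ hγ' (hσ.differentiable (by simp)) hint
    (hiff.mp hdϑ) t α

/-- Conformal time-dependent mechanics (`m = 1`): base `ℝ` with coordinate `t`,
Hamiltonian `H = ½ δ^{αβ} p_α p_β`, and closed 1-form `ϑ = ϑ_t dt`.
(A) A section `φ(t) = (t, σ^α(t), p_α(t))` of `J¹π* → ℝ` satisfies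
`φ*(ι_X (Ω_θ)_h) = 0` for all smooth vector fields `X` iff `dσ^α/dt = p_α` and
`dp_α/dt = ϑ_t p_α`.
(B) For a closed section `γ̄ = ρ dt + γ_α du^α`, the Hamilton–Jacobi condition
`d_ϑ(h∘μ∘γ̄) = 0` holds iff `γ_β ∂γ_α/∂u^β + ∂γ_α/∂t − ϑ_t γ_α = 0`; and when it holds,
every integral section `σ` of `h^γ` (i.e. `dσ^α/dt = γ_α(t,σ(t))`) gives a solution
`t ↦ (t, σ(t), γ(t,σ(t)))` of the equations in (A). -/
theorem conformal_time_dependent_mechanics (N : ℕ)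
    (H : Jb 1 N → ℝ)
    (hHdef : ∀ q : Jb 1 N, H q = (1 / 2) * ∑ α : Fin N, q.2.2 0 α * q.2.2 0 α)
    (ϑ : (Fin 1 → ℝ) → Fin 1 → ℝ) (hϑ : ContDiff ℝ (⊤ : ℕ∞) ϑ) :
    -- (A)
    (∀ (σ : (Fin 1 → ℝ) → Fin N → ℝ) (P : (Fin 1 → ℝ) → Fin 1 → Fin N → ℝ),
      ContDiff ℝ (⊤ : ℕ∞) σ → ContDiff ℝ (⊤ : ℕ∞) P →
      ((∀ X : Jb 1 N → Jb 1 N, ContDiff ℝ (⊤ : ℕ∞) X →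
          ∀ (t : Fin 1 → ℝ) (v : Fin 1 → Fin 1 → ℝ),
            pullC (secJ 1 N σ P) (iotaV X (OmegaThH 1 N H ϑ)) t v = 0) ↔
        (∀ (t : Fin 1 → ℝ) (α : Fin N),
          fderiv ℝ σ t (Pi.single 0 1) α = P t 0 α ∧
          fderiv ℝ P t (Pi.single 0 1) 0 α = ϑ t 0 * P t 0 α))) ∧
    -- (B)
    (∀ (ρ : Eb N → ℝ) (γ : Eb N → Fin N → ℝ),
      ContDiff ℝ (⊤ : ℕ∞) ρ → ContDiff ℝ (⊤ : ℕ∞) γ →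
      -- closedness of `γ̄ = ρ dt + γ_α du^α`:  `∂ρ/∂u^α = ∂γ_α/∂t`
      (∀ (e : Eb N) (α : Fin N),
        fderiv ℝ ρ e (0, Pi.single α 1) =
          fderiv ℝ (fun y => γ y α) e (Pi.single 0 1, 0)) →
      -- closedness of `γ̄`:  `∂γ_α/∂u^β = ∂γ_β/∂u^α`
      (∀ (e : Eb N) (α β : Fin N),
        fderiv ℝ (fun y => γ y α) e (0, Pi.single β 1) =
          fderiv ℝ (fun y => γ y β) e (0, Pi.single α 1)) →
      -- `h∘μ∘γ̄ = −H(t,u,γ(t,u)) dt + γ_α du^α` as a 1-form on `E`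
      ∀ G : Coch (Eb N) 1,
      (∀ (e : Eb N) (v : Fin 1 → Eb N),
        G e v = -(H (e.1, e.2, fun _ => γ e)) * (v 0).1 0 +
          ∑ α : Fin N, γ e α * (v 0).2 α) →
      -- `d_ϑ(h∘μ∘γ̄) = 0` iff the coordinate Hamilton–Jacobi equation
      (((∀ (e : Eb N) (v : Fin 2 → Eb N),
          extDer G e v - wedge1 (thE N ϑ) G e v = 0) ↔
        (∀ (e : Eb N) (α : Fin N),
          (∑ β : Fin N, γ e β * fderiv ℝ (fun y => γ y α) e (0, Pi.single β 1)) +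
            fderiv ℝ (fun y => γ y α) e (Pi.single 0 1, 0) - ϑ e.1 0 * γ e α = 0)) ∧
      -- and when it holds, integral sections of `h^γ` solve the equations of (A)
      ((∀ (e : Eb N) (v : Fin 2 → Eb N),
          extDer G e v - wedge1 (thE N ϑ) G e v = 0) →
        ∀ σ : (Fin 1 → ℝ) → Fin N → ℝ, ContDiff ℝ (⊤ : ℕ∞) σ →
          (∀ (t : Fin 1 → ℝ) (α : Fin N),
            fderiv ℝ σ t (Pi.single 0 1) α = γ (t, σ t) α) →
          (∀ (t : Fin 1 → ℝ) (α : Fin N),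
            fderiv ℝ σ t (Pi.single 0 1) α = γ (t, σ t) α ∧
            fderiv ℝ (fun s => γ (s, σ s) α) t (Pi.single 0 1) =
              ϑ t 0 * γ (t, σ t) α)))) :=
  conformal_time_dependent_mechanics_general N H hHdef ϑ
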